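/- arXiv:1009.2142 — 2 statements merged into one kernel-verified Lean document; each statement's English description precedes it below -/
import Mathlib

section
/- Define a system S of digital line segments on ℤ² as follows: for p = (p_x,p_y) and q = (q_x,q_y) with p_y ≤ q_y, let S(p,q) = {(x, p_y) : min(p_x,q_x) ≤ x ≤ max(p_x,q_x)} ∪ {(q_x, y) : p_y ≤ y ≤ q_y}, and for p_y > q_y let S(p,q) = S(q,p). Then S is a consistent digital line segments system, i.e., it satisfies axioms (S1)–(S5). -/
/- `upAt prec p q t` : the level `t` is among the `q.2 - p.2` greatest elements
(w.r.t. the order `prec`) of the segment interval `[p.1+p.2, q.1+q.2-1]`. -/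
open Classical in
noncomputable def upAt (prec : ℤ → ℤ → Prop) (p q : ℤ × ℤ) (t : ℤ) : Prop :=
  (((Finset.Ico (p.1 + p.2) (q.1 + q.2)).filter (fun u => u = t ∨ prec t u)).card : ℤ)
    ≤ q.2 - p.2

/- The digital segment derived from `prec`, for `p.1 ≤ q.1` and `p.2 ≤ q.2`:
the monotone staircase from `p` to `q` that goes up at level `t` exactly when
`upAt prec p q t` holds. -/
open Classical in
noncomputable def digSegNE (prec : ℤ → ℤ → Prop) (p q : ℤ × ℤ) : Set (ℤ × ℤ) :=
  { r | p.1 + p.2 ≤ r.1 + r.2 ∧ r.1 + r.2 ≤ q.1 + q.2 ∧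
    r.2 = p.2 + (((Finset.Ico (p.1 + p.2) (r.1 + r.2)).filter (fun t => upAt prec p q t)).card : ℤ) }

/- The digital segment for `p.1 ≤ q.1` (reflecting over the `y`-axis if `p.2 > q.2`). -/
noncomputable def digSegAux (prec : ℤ → ℤ → Prop) (p q : ℤ × ℤ) : Set (ℤ × ℤ) :=
  if p.2 ≤ q.2 then digSegNE prec p q
  else (fun r : ℤ × ℤ => (-r.1, r.2)) '' digSegNE prec (-q.1, q.2) (-p.1, p.2)

/- The full system of digital segments `S_≺` derived from the order `prec`. -/
noncomputable def digSeg (prec : ℤ → ℤ → Prop) (p q : ℤ × ℤ) : Set (ℤ × ℤ) :=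
  if p.1 ≤ q.1 then digSegAux prec p q else digSegAux prec q p

/- Adjacency in the grid graph on `ℤ²`. -/
def GridAdj (p q : ℤ × ℤ) : Prop :=
  (|q.1 - p.1| = 1 ∧ q.2 = p.2) ∨ (q.1 = p.1 ∧ |q.2 - p.2| = 1)

/- `S` is the vertex set of a path from `p` to `q` in the grid graph on `ℤ²`. -/
def IsGridPath (p q : ℤ × ℤ) (S : Set (ℤ × ℤ)) : Prop :=
  ∃ n : ℕ, ∃ f : Fin (n + 1) → ℤ × ℤ, f 0 = p ∧ f (Fin.last n) = q ∧
    Function.Injective f ∧ (∀ i : Fin n, GridAdj (f i.castSucc) (f i.succ)) ∧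
    Set.range f = S

/- A consistent digital line segments system (CDS): axioms (S1)-(S5). -/
structure IsCDS (S : ℤ × ℤ → ℤ × ℤ → Set (ℤ × ℤ)) : Prop where
  path : ∀ p q, IsGridPath p q (S p q)                     -- (S1)
  symm : ∀ p q, S p q = S q p                               -- (S2)
  subseg : ∀ p q r, r ∈ S p q → S p r ⊆ S p q               -- (S3)
  prolong : ∀ p q, ∃ r, r ∉ S p q ∧ S p q ⊆ S p r           -- (S4)
  monoV : ∀ p q, p.1 = q.1 → ∀ r ∈ S p q, r.1 = p.1         -- (S5), vertical
  monoH : ∀ p q, p.2 = q.2 → ∀ r ∈ S p q, r.2 = p.2         -- (S5), horizontal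

/- The inclusion `ℤ² ⊆ ℝ²` (Euclidean plane). -/
noncomputable def toR2 (p : ℤ × ℤ) : EuclideanSpace ℝ (Fin 2) := WithLp.toLp 2 ![(p.1 : ℝ), (p.2 : ℝ)]

/- The 2-adic valuation of an integer, with `v2 0 = ⊤`. -/
noncomputable def v2 (k : ℤ) : ℕ∞ := if k = 0 then ⊤ else (padicValInt 2 k : ℕ∞)

/- The total order on `ℤ` defined via 2-adic valuations. -/
def vorder (a b : ℤ) : Prop :=
  ∃ i : ℕ, v2 (a - i) < v2 (b - i) ∧ ∀ j : ℕ, j < i → v2 (a - j) = v2 (b - j)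
/- The "box boundary" digital segment system: from the endpoint with smaller
`y`-coordinate, go horizontally to the vertical line of the other endpoint, then
go up. -/
def boxSeg (p q : ℤ × ℤ) : Set (ℤ × ℤ) :=
  if p.2 ≤ q.2 then
    {r : ℤ × ℤ | r.2 = p.2 ∧ min p.1 q.1 ≤ r.1 ∧ r.1 ≤ max p.1 q.1} ∪
      {r : ℤ × ℤ | r.1 = q.1 ∧ p.2 ≤ r.2 ∧ r.2 ≤ q.2}
  else
    {r : ℤ × ℤ | r.2 = q.2 ∧ min p.1 q.1 ≤ r.1 ∧ r.1 ≤ max p.1 q.1} ∪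
      {r : ℤ × ℤ | r.1 = p.1 ∧ q.2 ≤ r.2 ∧ r.2 ≤ p.2}

/- The segment from the lower endpoint runs horizontally to the vertical line through the upper
endpoint and then up to it. As a union of a horizontal and a vertical interval it makes (S2)-(S5)
linear arithmetic; for (S1) we walk along the L-shape one unit step at a time, and for (S4) the
segment is prolonged beyond `q` upwards if `q` is the upper endpoint, and horizontally away from
`p` otherwise. -/

lemma gridAdj_iff {p q : ℤ × ℤ} : GridAdj p q ↔
    ((q.1 - p.1 = 1 ∨ q.1 - p.1 = -1) ∧ q.2 = p.2) ∨
      (q.1 = p.1 ∧ (q.2 - p.2 = 1 ∨ q.2 - p.2 = -1)) := by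
  rw [GridAdj, abs_eq zero_le_one, abs_eq zero_le_one]

lemma GridAdj.symm {p q : ℤ × ℤ} (h : GridAdj p q) : GridAdj q p := by
  rw [gridAdj_iff] at h ⊢
  omega

lemma IsGridPath.symm {p q : ℤ × ℤ} {S : Set (ℤ × ℤ)} (h : IsGridPath p q S) :
    IsGridPath q p S := by
  obtain ⟨n, f, hp, hq, hinj, hadj, rfl⟩ := h
  refine ⟨n, f ∘ Fin.rev, by simpa using hq, by simpa using hp,
    hinj.comp Fin.rev_injective, fun i => ?_, Fin.rev_surjective.range_comp f⟩
  simpa only [Function.comp_apply, Fin.rev_castSucc, Fin.rev_succ] using (hadj i.rev).symm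

lemma isGridPath_of_walk {p q : ℤ × ℤ} (n : ℕ) (g : ℕ → ℤ × ℤ) (hp : g 0 = p) (hq : g n = q)
    (hinj : Set.InjOn g (Set.Iic n)) (hadj : ∀ k < n, GridAdj (g k) (g (k + 1))) :
    IsGridPath p q (g '' Set.Iic n) := by
  refine ⟨n, fun i => g i, hp, hq, fun i j hij => ?_, fun i => hadj i i.isLt, ?_⟩
  · exact Fin.ext (hinj (Set.mem_Iic.2 i.is_le) (Set.mem_Iic.2 j.is_le) hij)
  · ext r
    simp only [Set.mem_range, Set.mem_image, Set.mem_Iic]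
    exact ⟨fun ⟨i, hi⟩ => ⟨i, i.is_le, hi⟩, fun ⟨k, hk, hr⟩ => ⟨⟨k, by omega⟩, hr⟩⟩

def lSeg (p q : ℤ × ℤ) : Set (ℤ × ℤ) :=
  {r | r.2 = p.2 ∧ min p.1 q.1 ≤ r.1 ∧ r.1 ≤ max p.1 q.1} ∪
    {r | r.1 = q.1 ∧ p.2 ≤ r.2 ∧ r.2 ≤ q.2}

def lWalk (p q : ℤ × ℤ) (k : ℕ) : ℤ × ℤ :=
  if k ≤ (q.1 - p.1).natAbs then (if p.1 ≤ q.1 then p.1 + k else p.1 - k, p.2)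
  else (q.1, p.2 + (k - (q.1 - p.1).natAbs))

lemma lWalk_injective (p q : ℤ × ℤ) : Function.Injective (lWalk p q) := by
  intro i j hij
  simp only [lWalk, Prod.ext_iff] at hij
  split_ifs at hij <;> omega

lemma gridAdj_lWalk (p q : ℤ × ℤ) (k : ℕ) : GridAdj (lWalk p q k) (lWalk p q (k + 1)) := by
  rw [gridAdj_iff]
  simp only [lWalk]
  split_ifs <;> omega

lemma lWalk_image_eq_lSeg {p q : ℤ × ℤ} (h : p.2 ≤ q.2) :
    lWalk p q '' Set.Iic ((q.1 - p.1).natAbs + (q.2 - p.2).toNat) = lSeg p q := by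
  ext ⟨x, y⟩
  simp only [Set.mem_image, lSeg, Set.mem_union, Set.mem_ofPred_eq]
  constructor
  · rintro ⟨k, hk, hr⟩
    replace hk : k ≤ _ := hk
    simp only [lWalk, Prod.ext_iff] at hr
    split_ifs at hr <;> omega
  · rintro (⟨rfl, hx⟩ | ⟨rfl, hy⟩)
    · refine ⟨(x - p.1).natAbs, Set.mem_Iic.2 (by omega), ?_⟩
      simp only [lWalk, Prod.ext_iff]
      split_ifs <;> omega
    · refine ⟨(q.1 - p.1).natAbs + (y - p.2).toNat, Set.mem_Iic.2 (by omega), ?_⟩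
      simp only [lWalk, Prod.ext_iff]
      split_ifs <;> omega

lemma isGridPath_lSeg {p q : ℤ × ℤ} (h : p.2 ≤ q.2) : IsGridPath p q (lSeg p q) := by
  rw [← lWalk_image_eq_lSeg h]
  refine isGridPath_of_walk _ _ ?_ ?_ (lWalk_injective p q).injOn fun k _ => gridAdj_lWalk p q k
  · simp [lWalk]
  · simp only [lWalk, Prod.ext_iff]
    split_ifs <;> omega

lemma boxSeg_eq (p q : ℤ × ℤ) : boxSeg p q = if p.2 ≤ q.2 then lSeg p q else lSeg q p := by
  unfold boxSeg lSeg
  rw [min_comm q.1, max_comm q.1]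

lemma isGridPath_boxSeg (p q : ℤ × ℤ) : IsGridPath p q (boxSeg p q) := by
  rw [boxSeg_eq]
  split_ifs with h
  · exact isGridPath_lSeg h
  · exact (isGridPath_lSeg (le_of_not_ge h)).symm

lemma mem_boxSeg {p q r : ℤ × ℤ} : r ∈ boxSeg p q ↔
    (p.2 ≤ q.2 ∧ ((r.2 = p.2 ∧ min p.1 q.1 ≤ r.1 ∧ r.1 ≤ max p.1 q.1) ∨
        (r.1 = q.1 ∧ p.2 ≤ r.2 ∧ r.2 ≤ q.2))) ∨
      (q.2 < p.2 ∧ ((r.2 = q.2 ∧ min p.1 q.1 ≤ r.1 ∧ r.1 ≤ max p.1 q.1) ∨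
        (r.1 = p.1 ∧ q.2 ≤ r.2 ∧ r.2 ≤ p.2))) := by
  unfold boxSeg
  split_ifs <;> simp only [Set.mem_union, Set.mem_ofPred_eq] <;> omega

lemma boxSeg_comm (p q : ℤ × ℤ) : boxSeg p q = boxSeg q p := by
  ext r
  rw [mem_boxSeg, mem_boxSeg]
  omega

lemma boxSeg_subset_of_mem {p q r : ℤ × ℤ} (hr : r ∈ boxSeg p q) : boxSeg p r ⊆ boxSeg p q := by
  intro t ht
  rw [mem_boxSeg] at hr ht ⊢
  omega

lemma exists_boxSeg_extension (p q : ℤ × ℤ) :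
    ∃ r, r ∉ boxSeg p q ∧ boxSeg p q ⊆ boxSeg p r := by
  refine ⟨if p.2 ≤ q.2 then (q.1, q.2 + 1) else (q.1 + if p.1 ≤ q.1 then 1 else -1, q.2),
    fun hr => ?_, fun t ht => ?_⟩
  · rw [mem_boxSeg] at hr
    split_ifs at hr <;> omega
  · rw [mem_boxSeg] at ht ⊢
    split_ifs <;> omega

theorem boxSeg_isCDS : IsCDS boxSeg := by
  refine ⟨isGridPath_boxSeg, boxSeg_comm, fun _ _ _ => boxSeg_subset_of_mem,
    exists_boxSeg_extension, fun p q h r hr => ?_, fun p q h r hr => ?_⟩ <;>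
  · rw [mem_boxSeg] at hr
    omega
end

section
/- Let ≺ be a strict total order on ℤ and let ℓ ⊆ ℤ² be a digital line with respect to S_≺ with non-negative slope, i.e., ℓ is the vertex set of a path infinite in both directions in the grid graph on ℤ², S_≺(p,q) ⊆ ℓ for all p,q ∈ ℓ, and (q_x−p_x)(q_y−p_y) ≥ 0 for all p,q ∈ ℓ. Define the slope A_ℓ = {x+y : (x,y) ∈ ℓ and (x,y+1) ∈ ℓ}. Then A_ℓ is upward closed with respect to ≺: if a ∈ A_ℓ and a ≺ b, then b ∈ A_ℓ. -/
/-!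
A line of non-negative slope meets each anti-diagonal `x + y = s` in at most one point, and,
being a bi-infinite grid path, in exactly one. Hence between two of its points `p ≤ q` the line
coincides with the staircase `S_≺(p, q)`, whose up-steps are at the levels among the
`q.2 - p.2` greatest ones for `≺`; and that set of levels is upward closed.
-/

theorem Int.sub_eq_sub_of_injective_of_step {L : ℤ → ℤ} (hinj : Function.Injective L)
    (hstep : ∀ i, L (i + 1) = L i + 1 ∨ L (i + 1) = L i - 1) (i : ℤ) :
    L (i + 1) - L i = L 1 - L 0 := by
  have hnext : ∀ k, L (k + 1 + 1) - L (k + 1) = L (k + 1) - L k := fun k => by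
    have hback : L (k + 1 + 1) ≠ L k := fun h => by have := hinj h; omega
    rcases hstep k with h | h <;> rcases hstep (k + 1) with h' | h' <;> omega
  induction i using Int.induction_on with
  | zero => simp
  | succ k ih => rw [hnext, ih]
  | pred k ih => have := hnext (-k - 1); simp only [sub_add_cancel] at this ⊢; omega

theorem Int.surjective_of_injective_of_step {L : ℤ → ℤ} (hinj : Function.Injective L)
    (hstep : ∀ i, L (i + 1) = L i + 1 ∨ L (i + 1) = L i - 1) : Function.Surjective L := by
  set e := L 1 - L 0
  have hL : ∀ i, L i = L 0 + e * i := fun i => by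
    induction i using Int.induction_on with
    | zero => simp
    | succ k ih => linear_combination ih + Int.sub_eq_sub_of_injective_of_step hinj hstep k
    | pred k ih =>
      have := Int.sub_eq_sub_of_injective_of_step hinj hstep (-k - 1)
      simp only [sub_add_cancel] at this
      linear_combination ih - this
  have he : e * e = 1 := by rcases hstep 0 with h | h <;> simp only [zero_add] at h <;> simp [e, h]
  exact fun s => ⟨e * (s - L 0), by linear_combination hL (e * (s - L 0)) + (s - L 0) * he⟩

theorem GridAdj.add_eq {p q : ℤ × ℤ} (h : GridAdj p q) :
    q.1 + q.2 = p.1 + p.2 + 1 ∨ q.1 + q.2 = p.1 + p.2 - 1 := by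
  rcases h with ⟨h, h'⟩ | ⟨h', h⟩ <;> rcases abs_eq (zero_le_one' ℤ) |>.1 h with h | h <;> omega

theorem Prod.eq_of_add_eq_of_mul_nonneg {p q : ℤ × ℤ} (h : 0 ≤ (q.1 - p.1) * (q.2 - p.2))
    (hl : p.1 + p.2 = q.1 + q.2) : p = q := by
  have : q.2 - p.2 = 0 := by nlinarith
  exact Prod.ext (by omega) (by omega)

theorem Prod.le_of_add_le_of_mul_nonneg {p q : ℤ × ℤ} (h : 0 ≤ (q.1 - p.1) * (q.2 - p.2))
    (hl : p.1 + p.2 ≤ q.1 + q.2) : p.1 ≤ q.1 ∧ p.2 ≤ q.2 := by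
  constructor <;> nlinarith

theorem exists_mem_add_eq_of_gridPath {ℓ : Set (ℤ × ℤ)}
    (hpath : ∃ f : ℤ → ℤ × ℤ, Function.Injective f ∧
      (∀ i : ℤ, GridAdj (f i) (f (i + 1))) ∧ Set.range f = ℓ)
    (hslope : ∀ p ∈ ℓ, ∀ q ∈ ℓ, 0 ≤ (q.1 - p.1) * (q.2 - p.2)) (s : ℤ) :
    ∃ r ∈ ℓ, r.1 + r.2 = s := by
  obtain ⟨f, hinj, hadj, rfl⟩ := hpath
  have hLinj : Function.Injective fun i => (f i).1 + (f i).2 := fun i j h =>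
    hinj (Prod.eq_of_add_eq_of_mul_nonneg (hslope _ ⟨i, rfl⟩ _ ⟨j, rfl⟩) h)
  obtain ⟨i, hi⟩ := Int.surjective_of_injective_of_step hLinj (fun i => (hadj i).add_eq) s
  exact ⟨f i, ⟨i, rfl⟩, hi⟩

def lineSlope (ℓ : Set (ℤ × ℤ)) : Set ℤ :=
  {s | ∃ x y : ℤ, (x, y) ∈ ℓ ∧ (x, y + 1) ∈ ℓ ∧ x + y = s}

section Staircase

variable (prec : ℤ → ℤ → Prop) (p q : ℤ × ℤ)

open Classical in
noncomputable def stairHeight (s : ℤ) : ℕ :=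
  ((Finset.Ico (p.1 + p.2) s).filter (fun t => upAt prec p q t)).card

noncomputable def stairPt (s : ℤ) : ℤ × ℤ :=
  (s - p.2 - stairHeight prec p q s, p.2 + stairHeight prec p q s)

variable {prec p q}

theorem digSeg_eq_digSegNE (h₁ : p.1 ≤ q.1) (h₂ : p.2 ≤ q.2) :
    digSeg prec p q = digSegNE prec p q := by
  simp [digSeg, digSegAux, h₁, h₂]

theorem stairPt_mem_digSegNE {s : ℤ} (h₁ : p.1 + p.2 ≤ s) (h₂ : s ≤ q.1 + q.2) :
    stairPt prec p q s ∈ digSegNE prec p q := by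
  refine ⟨by simpa [stairPt] using h₁, by simpa [stairPt] using h₂, ?_⟩
  simp [stairPt, stairHeight]

open Classical in
theorem stairHeight_succ {s : ℤ} (h : p.1 + p.2 ≤ s) :
    stairHeight prec p q (s + 1) = stairHeight prec p q s + if upAt prec p q s then 1 else 0 := by
  rw [stairHeight, stairHeight, ← Finset.insert_Ico_right_eq_Ico_add_one h, Finset.filter_insert]
  split_ifs with hup
  · exact Finset.card_insert_of_notMem (by simp)
  · rfl

theorem upAt_of_prec [IsTrans ℤ prec] {a b : ℤ} (ha : upAt prec p q a) (hab : prec a b) :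
    upAt prec p q b := by
  classical
  refine le_trans (Int.ofNat_le.2 (Finset.card_le_card ?_)) ha
  refine Finset.monotone_filter_right _ fun u _ hbu => Or.inr ?_
  rcases hbu with rfl | hbu
  exacts [hab, _root_.trans hab hbu]

theorem mem_lineSlope_iff_upAt {ℓ : Set (ℤ × ℤ)}
    (hslope : ∀ p ∈ ℓ, ∀ q ∈ ℓ, 0 ≤ (q.1 - p.1) * (q.2 - p.2))
    (hseg : digSegNE prec p q ⊆ ℓ) {s : ℤ} (h₁ : p.1 + p.2 ≤ s) (h₂ : s < q.1 + q.2) :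
    s ∈ lineSlope ℓ ↔ upAt prec p q s := by
  have hs := stairHeight_succ (prec := prec) (q := q) h₁
  have hmem : ∀ t, p.1 + p.2 ≤ t → t ≤ q.1 + q.2 → stairPt prec p q t ∈ ℓ :=
    fun t ht₁ ht₂ => hseg (stairPt_mem_digSegNE ht₁ ht₂)
  have hpt : ∀ r ∈ ℓ, ∀ t, r.1 + r.2 = t → p.1 + p.2 ≤ t → t ≤ q.1 + q.2 →
      r = stairPt prec p q t := fun r hr t ht ht₁ ht₂ =>
    Prod.eq_of_add_eq_of_mul_nonneg (hslope _ hr _ (hmem t ht₁ ht₂)) (by simp [stairPt, ht])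
  constructor
  · rintro ⟨x, y, hxy, hxy', rfl⟩
    have e := congrArg Prod.snd (hpt _ hxy _ rfl h₁ h₂.le)
    have e' := congrArg Prod.snd (hpt _ hxy' (x + y + 1) (by ring) (by omega) h₂)
    simp only [stairPt] at e e'
    by_contra hup
    simp only [hup, if_false] at hs
    omega
  · intro hup
    simp only [hup, if_true] at hs
    have hup_pt : stairPt prec p q (s + 1) =
        ((stairPt prec p q s).1, (stairPt prec p q s).2 + 1) := by
      simp only [stairPt, hs]
      ext <;> push_cast <;> ring
    refine ⟨_, _, hmem s h₁ h₂.le, hup_pt ▸ hmem (s + 1) (by omega) h₂, by simp⟩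

end Staircase

theorem digital_line_slope_upward_closed (prec : ℤ → ℤ → Prop) [IsStrictTotalOrder ℤ prec]
    (ℓ : Set (ℤ × ℤ))
    (hpath : ∃ f : ℤ → ℤ × ℤ, Function.Injective f ∧
      (∀ i : ℤ, GridAdj (f i) (f (i + 1))) ∧ Set.range f = ℓ)
    (hseg : ∀ p ∈ ℓ, ∀ q ∈ ℓ, digSeg prec p q ⊆ ℓ)
    (hslope : ∀ p ∈ ℓ, ∀ q ∈ ℓ, 0 ≤ ((q : ℤ × ℤ).1 - p.1) * (q.2 - p.2)) :
    ∀ a b : ℤ,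
      a ∈ {s : ℤ | ∃ x y : ℤ, (x, y) ∈ ℓ ∧ (x, y + 1) ∈ ℓ ∧ x + y = s} →
      prec a b →
      b ∈ {s : ℤ | ∃ x y : ℤ, (x, y) ∈ ℓ ∧ (x, y + 1) ∈ ℓ ∧ x + y = s} := by
  intro a b ha hab
  obtain ⟨p, hp, hpl⟩ := exists_mem_add_eq_of_gridPath hpath hslope (min a b)
  obtain ⟨q, hq, hql⟩ := exists_mem_add_eq_of_gridPath hpath hslope (max a b + 1)
  obtain ⟨h₁, h₂⟩ := Prod.le_of_add_le_of_mul_nonneg (hslope p hp q hq) (by omega)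
  have hsub : digSegNE prec p q ⊆ ℓ := digSeg_eq_digSegNE h₁ h₂ ▸ hseg p hp q hq
  have hiff := fun s (hs₁ : min a b ≤ s) (hs₂ : s ≤ max a b) =>
    mem_lineSlope_iff_upAt hslope hsub (s := s) (by omega) (by omega)
  exact (hiff b (min_le_right a b) (le_max_right a b)).2
    (upAt_of_prec ((hiff a (min_le_left a b) (le_max_left a b)).1 ha) hab)
end
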